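/- arXiv:2012.04857 — 2 statements merged into one kernel-verified Lean document; each statement's English description precedes it below -/
import Mathlib

section
/- Let E be a real inner product space, let F_i, F : E → ℝ be differentiable, suppose ∇F_i is β-Lipschitz with β > 0, let η > 0, δ ≥ 0, and suppose ‖∇F_i(x) − ∇F(x)‖ ≤ δ for all x ∈ E. Let t₀ be a natural number and let w, v : ℕ → E be sequences with w(t₀) = v(t₀), w(t+1) = w(t) − η∇F_i(w(t)) and v(t+1) = v(t) − η∇F(v(t)) for all t ≥ t₀. Then for all t ≥ t₀, ‖w(t) − v(t)‖ ≤ (δ/β)·((ηβ + 1)^{t − t₀} − 1). (Eq. (14) of the paper: divergence between a local model and a virtual group model over a group interval.) -/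
/-- **Eq. (14) of the paper: divergence between a local model and a virtual group model.**
Let `E` be a real inner product space, `Fi F : E → ℝ` differentiable with gradient fields
`Gi G : E → E`, `Gi` `β`-Lipschitz with `β > 0`, `η > 0`, `δ ≥ 0`, and
`‖Gi x - G x‖ ≤ δ` for all `x`. Let `w v : ℕ → E` with `w t₀ = v t₀`,
`w (t+1) = w t - η • Gi (w t)` and `v (t+1) = v t - η • G (v t)` for all `t ≥ t₀`.
Then for all `t ≥ t₀`, `‖w t - v t‖ ≤ (δ/β) * ((η*β + 1)^(t - t₀) - 1)`. -/
theorem stmt3 {E : Type*} [NormedAddCommGroup E] [InnerProductSpace ℝ E]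
    (Fi F : E → ℝ) (Gi G : E → E) (β η δ : ℝ)
    (hβ : 0 < β) (hη : 0 < η) (hδ : 0 ≤ δ)
    (hFi : ∀ x, HasFDerivAt Fi (innerSL ℝ (Gi x)) x)
    (hF : ∀ x, HasFDerivAt F (innerSL ℝ (G x)) x)
    (hGiLip : ∀ x y, ‖Gi x - Gi y‖ ≤ β * ‖x - y‖)
    (hdiv : ∀ x, ‖Gi x - G x‖ ≤ δ)
    (t₀ : ℕ) (w v : ℕ → E) (h0 : w t₀ = v t₀)
    (hw : ∀ t, t₀ ≤ t → w (t + 1) = w t - η • Gi (w t))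
    (hv : ∀ t, t₀ ≤ t → v (t + 1) = v t - η • G (v t)) :
    ∀ t, t₀ ≤ t → ‖w t - v t‖ ≤ δ / β * ((η * β + 1) ^ (t - t₀) - 1) := by
  intro t ht
  induction t, ht using Nat.le_induction with
  | base => simp [h0]
  | succ t ht ih =>
    have key : w (t+1) - v (t+1)
        = (w t - v t) - η • (Gi (w t) - Gi (v t)) - η • (Gi (v t) - G (v t)) := by
      rw [hw t ht, hv t ht]
      simp [smul_sub]; abel
    have hb : (0:ℝ) < η * β + 1 := by positivity
    have hstep : ‖w (t+1) - v (t+1)‖ ≤ (η * β + 1) * ‖w t - v t‖ + η * δ := by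
      rw [key]
      calc ‖(w t - v t) - η • (Gi (w t) - Gi (v t)) - η • (Gi (v t) - G (v t))‖
          ≤ ‖(w t - v t) - η • (Gi (w t) - Gi (v t))‖ + ‖η • (Gi (v t) - G (v t))‖ :=
            norm_sub_le _ _
        _ ≤ (‖w t - v t‖ + ‖η • (Gi (w t) - Gi (v t))‖) + ‖η • (Gi (v t) - G (v t))‖ := by
            gcongr; exact norm_sub_le _ _
        _ ≤ (‖w t - v t‖ + η * (β * ‖w t - v t‖)) + η * δ := by
            rw [norm_smul, norm_smul, Real.norm_of_nonneg hη.le]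
            gcongr
            · exact hGiLip _ _
            · exact hdiv _
        _ = (η * β + 1) * ‖w t - v t‖ + η * δ := by ring
    have hsub : t + 1 - t₀ = (t - t₀) + 1 := by omega
    rw [hsub, pow_succ]
    calc ‖w (t+1) - v (t+1)‖ ≤ (η * β + 1) * ‖w t - v t‖ + η * δ := hstep
      _ ≤ (η * β + 1) * (δ / β * ((η * β + 1) ^ (t - t₀) - 1)) + η * δ := by gcongr
      _ = δ / β * ((η * β + 1) ^ (t - t₀) * (η * β + 1) - 1) := by
          field_simp; ring
end

section
/- Let E be a real inner product space, F : E → ℝ convex and differentiable, and η > 0. For any v, w ∈ E, setting v' := v − η∇F(v), F(v) − F(w) ≤ (η/2)‖∇F(v)‖² + (1/(2η))·(‖v − w‖² − ‖v' − w‖²). (Eq. (23) of the paper: one-step gradient descent inequality for convex functions.) -/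
/-! The first-order characterisation of convexity gives `F v - F w ≤ ⟪∇F v, v - w⟫`, and
expanding `‖v' - w‖²` shows that the right-hand side equals exactly this inner product. -/

open AffineMap

theorem ConvexOn.add_fderiv_sub_le {E : Type*} [NormedAddCommGroup E] [NormedSpace ℝ E]
    {f : E → ℝ} {f' : E →L[ℝ] ℝ} {s : Set E} {x y : E} (hf : ConvexOn ℝ s f)
    (hx : x ∈ s) (hy : y ∈ s) (hf' : HasFDerivAt f f' x) :
    f x + f' (y - x) ≤ f y := by
  set ℓ : ℝ →ᵃ[ℝ] E := lineMap x y
  have hline : HasDerivAt (f ∘ ℓ) (f' (y - x)) 0 := by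
    have h0 : HasFDerivAt f f' (ℓ 0) := by simpa [ℓ] using hf'
    exact h0.comp_hasDerivAt 0 hasDerivAt_lineMap
  have := (hf.comp_affineMap ℓ).le_slope_of_hasDerivAt
    (by simpa [ℓ] using hx) (by simpa [ℓ] using hy) zero_lt_one hline
  simp only [slope_def_field, Function.comp_apply, ℓ, lineMap_apply_zero, lineMap_apply_one,
    sub_zero, div_one] at this
  linarith

theorem norm_sub_smul_sub_sq {E : Type*} [NormedAddCommGroup E] [InnerProductSpace ℝ E]
    (v w g : E) (η : ℝ) :
    ‖(v - η • g) - w‖ ^ 2 = ‖v - w‖ ^ 2 - 2 * η * inner ℝ g (v - w) + η ^ 2 * ‖g‖ ^ 2 := by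
  rw [sub_right_comm, norm_sub_sq_real, real_inner_smul_right, norm_smul, real_inner_comm,
    Real.norm_eq_abs, mul_pow, sq_abs]
  ring

/-- **Eq. (23) of the paper: one-step gradient descent inequality for convex functions.**
Let `E` be a real inner product space, `F : E → ℝ` convex and differentiable with
gradient field `G : E → E`, and `η > 0`. Then for any `v w : E`, with `v' := v - η • G v`,
`F v - F w ≤ (η/2) * ‖G v‖² + (1/(2η)) * (‖v - w‖² - ‖v' - w‖²)`. -/
theorem stmt7 {E : Type*} [NormedAddCommGroup E] [InnerProductSpace ℝ E]
    (F : E → ℝ) (G : E → E) (η : ℝ) (hη : 0 < η)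
    (hconv : ConvexOn ℝ Set.univ F)
    (hF : ∀ x, HasFDerivAt F (innerSL ℝ (G x)) x)
    (v w : E) :
    F v - F w ≤ η / 2 * ‖G v‖ ^ 2 +
      1 / (2 * η) * (‖v - w‖ ^ 2 - ‖(v - η • G v) - w‖ ^ 2) := by
  have hfirst : F v + inner ℝ (G v) (w - v) ≤ F w :=
    hconv.add_fderiv_sub_le (Set.mem_univ v) (Set.mem_univ w) (hF v)
  have hinner : inner ℝ (G v) (w - v) = -inner ℝ (G v) (v - w) := by
    rw [← inner_neg_right, neg_sub]
  have hrhs : η / 2 * ‖G v‖ ^ 2 + 1 / (2 * η) * (‖v - w‖ ^ 2 - ‖(v - η • G v) - w‖ ^ 2)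
      = inner ℝ (G v) (v - w) := by
    rw [norm_sub_smul_sub_sq]
    field_simp
    ring
  linarith
end
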